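/- For every integer n ≥ 1, Σ_α μ_{ℓ(α)} = 1, where the sum is over all odd compositions α of n and ℓ(α) is the number of parts of α. -/

import Mathlib

/-- `α` is an odd composition of `m`: a list of positive odd integers summing to `m`. -/
def IsOddComposition (m : ℕ) (α : List ℕ) : Prop :=
  (∀ a ∈ α, 0 < a) ∧ α.sum = m ∧ ∀ a ∈ α, Odd a

/-- Refinement order on compositions: `β ≤ α` iff every part of `β` is the sum of a
chunk of consecutive parts of `α` (in order). -/
def CoarserLEc (β α : List ℕ) : Prop :=
  ∃ L : List (List ℕ), (∀ c ∈ L, c ≠ []) ∧ L.flatten = α ∧ β = L.map List.sum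

/-- `M ℓ` is the Möbius function of the poset of odd compositions of `ℓ` under the
refinement order: for all `β ≤ α` in this poset,
`Σ_{β ≤ γ ≤ α} M ℓ β γ = δ_{βα}`. -/
def IsMobiusOddComp (M : ℕ → List ℕ → List ℕ → ℤ) : Prop :=
  ∀ ℓ : ℕ, ∀ β α : List ℕ, IsOddComposition ℓ β → IsOddComposition ℓ α →
    CoarserLEc β α →
    (∑ᶠ γ ∈ {γ : List ℕ | IsOddComposition ℓ γ ∧ CoarserLEc β γ ∧ CoarserLEc γ α},
      M ℓ β γ) = if β = α then 1 else 0

namespace Stmt17Aux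

open List

/-- Coarsen `g` by grouping consecutive chunks whose lengths are given by `b`. -/
def coarsen : List ℕ → List ℕ → List ℕ
  | [], _ => []
  | k :: b, g => (g.take k).sum :: coarsen b (g.drop k)

@[simp] lemma coarsen_nil (g : List ℕ) : coarsen [] g = [] := rfl

@[simp] lemma coarsen_cons (k : ℕ) (b g : List ℕ) :
    coarsen (k :: b) g = (g.take k).sum :: coarsen b (g.drop k) := rfl

@[simp] lemma coarsen_length (b g : List ℕ) : (coarsen b g).length = b.length := by
  induction b generalizing g with
  | nil => rfl
  | cons k b ih => simp [ih]

lemma sum_coarsen (b g : List ℕ) : (coarsen b g).sum = (g.take b.sum).sum := by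
  induction b generalizing g with
  | nil => simp
  | cons k b ih =>
    simp only [coarsen_cons, sum_cons, ih, List.sum_cons, List.take_add, List.sum_append]

lemma take_coarsen (n : ℕ) (b g : List ℕ) :
    (coarsen b g).take n = coarsen (b.take n) g := by
  induction b generalizing n g with
  | nil => simp
  | cons k b ih =>
    cases n with
    | zero => simp
    | succ n => simp [ih]

lemma drop_coarsen (n : ℕ) (b g : List ℕ) :
    (coarsen b g).drop n = coarsen (b.drop n) (g.drop (b.take n).sum) := by
  induction b generalizing n g with
  | nil => simp
  | cons k b ih =>
    cases n with
    | zero => simp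
    | succ n => simp [ih, List.drop_drop, Nat.add_comm]

lemma coarsen_coarsen (b' b g : List ℕ) :
    coarsen b' (coarsen b g) = coarsen (coarsen b' b) g := by
  induction b' generalizing b g with
  | nil => simp
  | cons k b' ih =>
    simp only [coarsen_cons]
    congr 1
    · rw [take_coarsen, sum_coarsen]
    · rw [drop_coarsen, ih]

lemma coarsen_replicate (b : List ℕ) : ∀ s : ℕ, b.sum ≤ s →
    coarsen b (List.replicate s 1) = b := by
  induction b with
  | nil => intro s _; rfl
  | cons k b ih =>
    intro s hs
    simp only [List.sum_cons] at hs
    have hk : k ≤ s := le_trans (Nat.le_add_right _ _) hs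
    simp only [coarsen_cons, List.take_replicate, List.drop_replicate]
    rw [min_eq_left hk]
    congr 1
    · simp
    · exact ih (s - k) (by omega)

lemma coarsen_self (g : List ℕ) : coarsen (List.replicate g.length 1) g = g := by
  induction g with
  | nil => rfl
  | cons a g ih =>
    simp only [List.length_cons, List.replicate_succ, coarsen_cons, List.take_succ_cons,
      List.take_zero, List.sum_cons, List.sum_nil, List.drop_succ_cons, List.drop_zero]
    rw [ih]
    simp

lemma length_le_sum {l : List ℕ} (h : ∀ a ∈ l, 0 < a) : l.length ≤ l.sum := by
  induction l with
  | nil => simp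
  | cons a t ih =>
    simp only [List.length_cons, List.sum_cons]
    have ha := h a (by simp)
    have := ih (fun x hx => h x (by simp [hx]))
    omega

lemma eq_replicate_of_sum_eq_length {l : List ℕ} (h : ∀ a ∈ l, 0 < a)
    (hs : l.sum = l.length) : l = List.replicate l.length 1 := by
  induction l with
  | nil => rfl
  | cons a t ih =>
    simp only [List.length_cons, List.sum_cons] at hs ⊢
    have ha := h a (by simp)
    have ht := length_le_sum (fun x hx => h x (List.mem_cons_of_mem _ hx))
    have ha1 : a = 1 := by omega
    have : t.sum = t.length := by omega
    rw [List.replicate_succ, ha1, ih (fun x hx => h x (List.mem_cons_of_mem _ hx)) this]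
    simp

lemma sum_take_inj {g : List ℕ} (hg : ∀ a ∈ g, 0 < a) :
    ∀ k k', k ≤ g.length → k' ≤ g.length →
      (g.take k).sum = (g.take k').sum → k = k' := by
  induction g with
  | nil => intro k k' h1 h2 _; simp at h1 h2; omega
  | cons a t ih =>
    intro k k' h1 h2 he
    have ha := hg a (by simp)
    match k, k' with
    | 0, 0 => rfl
    | 0, k' + 1 => simp at he; omega
    | k + 1, 0 => simp at he; omega
    | k + 1, k' + 1 =>
      simp only [List.take_succ_cons, List.sum_cons] at he
      simp only [List.length_cons] at h1 h2
      have := ih (fun x hx => hg x (by simp [hx])) k k' (by omega) (by omega) (by omega)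
      omega

lemma coarsen_inj : ∀ (b b' g : List ℕ), (∀ a ∈ g, 0 < a) → b.sum ≤ g.length →
    b'.sum ≤ g.length → coarsen b g = coarsen b' g → b = b' := by
  intro b
  induction b with
  | nil =>
    intro b' g _ _ _ he
    have : (coarsen b' g).length = 0 := by rw [← he]; rfl
    rw [coarsen_length] at this
    exact (List.eq_nil_of_length_eq_zero this).symm
  | cons k b ih =>
    intro b' g hg hs hs' he
    rcases b' with _ | ⟨k', b'⟩
    · have : (coarsen (k :: b) g).length = 0 := by rw [he]; rfl
      rw [coarsen_length] at this
      simp at this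
    · simp only [coarsen_cons, List.cons.injEq] at he
      simp only [List.sum_cons] at hs hs'
      have hk : k = k' := sum_take_inj hg k k' (by omega) (by omega) he.1
      subst hk
      have := ih b' (g.drop k) (fun a ha => hg a (List.mem_of_mem_drop ha))
        (by simp; omega) (by simp; omega) he.2
      rw [this]

/-- splitInto -/
def splitInto : List ℕ → List ℕ → List (List ℕ)
  | [], _ => []
  | k :: b, g => g.take k :: splitInto b (g.drop k)

lemma flatten_splitInto (b g : List ℕ) : (splitInto b g).flatten = g.take b.sum := by
  induction b generalizing g with
  | nil => simp [splitInto]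
  | cons k b ih => simp [splitInto, ih, List.take_add]

lemma map_sum_splitInto (b g : List ℕ) : (splitInto b g).map List.sum = coarsen b g := by
  induction b generalizing g with
  | nil => rfl
  | cons k b ih => simp [splitInto, ih]

lemma map_length_splitInto (b : List ℕ) : ∀ g : List ℕ, b.sum ≤ g.length →
    (splitInto b g).map List.length = b := by
  induction b with
  | nil => intro g _; rfl
  | cons k b ih =>
    intro g hs
    simp only [List.sum_cons] at hs
    simp only [splitInto, List.map_cons, List.length_take]
    congr 1
    · omega
    · exact ih _ (by simp; omega)

lemma coarsen_map_length (L : List (List ℕ)) :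
    coarsen (L.map List.length) L.flatten = L.map List.sum := by
  induction L with
  | nil => rfl
  | cons c L ih =>
    simp only [List.map_cons, List.flatten_cons, coarsen_cons, List.take_left, List.drop_left]
    rw [ih]

lemma coarserLEc_iff {δ g : List ℕ} :
    CoarserLEc δ g ↔ ∃ b : List ℕ, (∀ a ∈ b, 0 < a) ∧ b.sum = g.length ∧ δ = coarsen b g := by
  constructor
  · rintro ⟨L, hne, hfl, hδ⟩
    refine ⟨L.map List.length, ?_, ?_, ?_⟩
    · intro a ha
      simp only [List.mem_map] at ha
      obtain ⟨c, hc, rfl⟩ := ha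
      exact List.length_pos_iff.mpr (hne c hc)
    · rw [← hfl, List.length_flatten]
    · rw [hδ, ← hfl, coarsen_map_length]
  · rintro ⟨b, hpos, hsum, rfl⟩
    refine ⟨splitInto b g, ?_, ?_, ?_⟩
    · intro c hc
      have := map_length_splitInto b g (le_of_eq hsum)
      have hcl : c.length ∈ b := by
        rw [← this]; exact List.mem_map_of_mem hc
      have := hpos _ hcl
      intro h; rw [h] at this; simp at this
    · rw [flatten_splitInto, hsum, List.take_length]
    · rw [map_sum_splitInto]

lemma coarserLEc_refl (g : List ℕ) : CoarserLEc g g :=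
  coarserLEc_iff.mpr ⟨List.replicate g.length 1, by simp, by simp, (coarsen_self g).symm⟩

lemma coarserLEc_replicate {g : List ℕ} (hpos : ∀ a ∈ g, 0 < a) :
    CoarserLEc g (List.replicate g.sum 1) :=
  coarserLEc_iff.mpr ⟨g, hpos, by simp, (coarsen_replicate g _ le_rfl).symm⟩

lemma sum_mod_two (l : List ℕ) (h : ∀ a ∈ l, Odd a) : l.sum % 2 = l.length % 2 := by
  induction l with
  | nil => rfl
  | cons a t ih =>
    have ha : a % 2 = 1 := Nat.odd_iff.mp (h a (by simp))
    have := ih (fun x hx => h x (by simp [hx]))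
    simp only [List.sum_cons, List.length_cons]
    omega

lemma odd_sum {l : List ℕ} (h : ∀ a ∈ l, Odd a) (hl : Odd l.length) : Odd l.sum := by
  rw [Nat.odd_iff, sum_mod_two l h, ← Nat.odd_iff]; exact hl

lemma odd_length {l : List ℕ} (h : ∀ a ∈ l, Odd a) (hl : Odd l.sum) : Odd l.length := by
  rw [Nat.odd_iff, ← sum_mod_two l h, ← Nat.odd_iff]; exact hl

lemma pos_sum {l : List ℕ} (hne : l ≠ []) (h : ∀ a ∈ l, 0 < a) : 0 < l.sum := by
  rcases l with _ | ⟨a, t⟩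
  · exact absurd rfl hne
  · simp only [List.sum_cons]
    have := h a (by simp)
    omega

lemma coarsen_pos : ∀ b g : List ℕ, b.sum = g.length → (∀ a ∈ g, 0 < a) →
    (∀ k ∈ b, 0 < k) → ∀ x ∈ coarsen b g, 0 < x := by
  intro b
  induction b with
  | nil => intro g _ _ _ x hx; simp at hx
  | cons k b ih =>
    intro g hs hg hb x hx
    simp only [List.sum_cons] at hs
    simp only [coarsen_cons, List.mem_cons] at hx
    rcases hx with rfl | hx
    · apply pos_sum
      · have : (g.take k).length = k := by simp; omega
        intro h; rw [h] at this; simp at this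
        have := hb k (by simp); omega
      · intro a ha; exact hg a (List.mem_of_mem_take ha)
    · exact ih (g.drop k) (by simp; omega) (fun a ha => hg a (List.mem_of_mem_drop ha))
        (fun x hx => hb x (by simp [hx])) x hx

lemma coarsen_odd : ∀ b g : List ℕ, b.sum = g.length → (∀ a ∈ g, Odd a) →
    (∀ k ∈ b, Odd k) → ∀ x ∈ coarsen b g, Odd x := by
  intro b
  induction b with
  | nil => intro g _ _ _ x hx; simp at hx
  | cons k b ih =>
    intro g hs hg hb x hx
    simp only [List.sum_cons] at hs
    simp only [coarsen_cons, List.mem_cons] at hx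
    rcases hx with rfl | hx
    · apply odd_sum
      · intro a ha; exact hg a (List.mem_of_mem_take ha)
      · have : (g.take k).length = k := by simp; omega
        rw [this]; exact hb k (by simp)
    · exact ih (g.drop k) (by simp; omega) (fun a ha => hg a (List.mem_of_mem_drop ha))
        (fun x hx => hb x (by simp [hx])) x hx

lemma odd_of_coarsen_odd : ∀ b g : List ℕ, b.sum = g.length → (∀ a ∈ g, Odd a) →
    (∀ x ∈ coarsen b g, Odd x) → ∀ k ∈ b, Odd k := by
  intro b
  induction b with
  | nil => intro g _ _ _ k hk; simp at hk
  | cons k b ih =>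
    intro g hs hg hc x hx
    simp only [List.sum_cons] at hs
    simp only [List.mem_cons] at hx
    rcases hx with rfl | hx
    · have h1 : Odd (g.take x).sum := hc _ (by simp)
      have h2 := odd_length (fun a ha => hg a (List.mem_of_mem_take ha)) h1
      have : (g.take x).length = x := by simp; omega
      rwa [this] at h2
    · exact ih (g.drop k) (by simp; omega) (fun a ha => hg a (List.mem_of_mem_drop ha))
        (fun y hy => hc y (by simp [hy])) x hx

lemma finite_OC (m : ℕ) : {l : List ℕ | IsOddComposition m l}.Finite := by
  apply Set.Finite.subset (Set.finite_range (fun c : Composition m => c.blocks))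
  rintro l ⟨h1, h2, _⟩
  exact ⟨⟨l, fun hi => h1 _ hi, h2⟩, rfl⟩


lemma coarsen_OC {m : ℕ} {g : List ℕ} (hg : IsOddComposition m g) {b : List ℕ}
    (hbp : ∀ k ∈ b, 0 < k) (hbo : ∀ k ∈ b, Odd k) (hbs : b.sum = g.length) :
    IsOddComposition m (coarsen b g) :=
  ⟨coarsen_pos b g hbs hg.1 hbp,
   by rw [sum_coarsen, hbs, List.take_length]; exact hg.2.1,
   coarsen_odd b g hbs hg.2.2 hbo⟩

lemma replicate_OC (n : ℕ) : IsOddComposition n (List.replicate n 1) :=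
  ⟨by intro a ha; rw [List.eq_of_mem_replicate ha]; omega,
   by simp,
   by intro a ha; rw [List.eq_of_mem_replicate ha]; exact odd_one⟩

lemma length_lt_of_ne_replicate {ℓ : ℕ} {γ : List ℕ} (h : IsOddComposition ℓ γ)
    (hne : γ ≠ List.replicate ℓ 1) : γ.length < ℓ := by
  have h1 := length_le_sum h.1
  rw [h.2.1] at h1
  rcases lt_or_eq_of_le h1 with h2 | h2
  · exact h2
  · exfalso
    apply hne
    have := eq_replicate_of_sum_eq_length h.1 (by rw [h.2.1, h2])
    rw [this, h2]

lemma coarsen_eq_self_iff {b g : List ℕ} (hg : ∀ a ∈ g, 0 < a) (hbp : ∀ k ∈ b, 0 < k)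
    (hbs : b.sum = g.length) : coarsen b g = g ↔ b = List.replicate g.length 1 := by
  constructor
  · intro h
    apply coarsen_inj b (List.replicate g.length 1) g hg (le_of_eq hbs) (by simp)
    rw [h, coarsen_self]
  · rintro rfl
    exact coarsen_self g

lemma transport (M : ℕ → List ℕ → List ℕ → ℤ) (hM : IsMobiusOddComp M) :
    ∀ N : ℕ, ∀ g : List ℕ, ∀ m : ℕ, ∀ b : List ℕ, g.length ≤ N →
      IsOddComposition m g → (∀ k ∈ b, 0 < k) → (∀ k ∈ b, Odd k) → b.sum = g.length →
      M m (coarsen b g) g = M g.length b (List.replicate g.length 1) := by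
  intro N
  induction N with
  | zero =>
    intro g m b hlen hg hbp hbo hbs
    have hgnil : g = [] := List.eq_nil_of_length_eq_zero (Nat.le_zero.mp hlen)
    subst hgnil
    have hbnil : b = [] := by
      have := length_le_sum hbp
      simp at hbs
      exact List.eq_nil_of_length_eq_zero (by omega)
    subst hbnil
    have hm : m = 0 := by
      rcases hg with ⟨_, h2, _⟩
      simp at h2
      omega
    subst hm
    rfl
  | succ N ih =>
    intro g m b hlen hg hbp hbo hbs
    set ℓ := g.length with hℓ
    set δ := coarsen b g with hδdef
    set rep := List.replicate ℓ 1 with hrep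
    have hδOC : IsOddComposition m δ := coarsen_OC hg hbp hbo hbs
    have hbOC : IsOddComposition ℓ b := ⟨hbp, hbs, hbo⟩
    have hrepOC : IsOddComposition ℓ rep := replicate_OC ℓ
    have hδg : CoarserLEc δ g := coarserLEc_iff.mpr ⟨b, hbp, hbs, rfl⟩
    have hbrep : CoarserLEc b rep := by
      have := coarserLEc_replicate hbp
      rwa [hbs] at this
    have E1 := hM m δ g hδOC hg hδg
    have E2 := hM ℓ b rep hbOC hrepOC hbrep
    have hA : {γ : List ℕ | IsOddComposition m γ ∧ CoarserLEc δ γ ∧ CoarserLEc γ g}.Finite :=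
      (finite_OC m).subset (fun x hx => hx.1)
    have hB : {γ : List ℕ | IsOddComposition ℓ γ ∧ CoarserLEc b γ ∧ CoarserLEc γ rep}.Finite :=
      (finite_OC ℓ).subset (fun x hx => hx.1)
    rw [finsum_mem_eq_finite_toFinset_sum _ hA] at E1
    rw [finsum_mem_eq_finite_toFinset_sum _ hB] at E2
    have hgA : g ∈ hA.toFinset := by
      rw [Set.Finite.mem_toFinset]
      exact ⟨hg, hδg, coarserLEc_refl g⟩
    have hrepB : rep ∈ hB.toFinset := by
      rw [Set.Finite.mem_toFinset]
      exact ⟨hrepOC, hbrep, coarserLEc_refl rep⟩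
    rw [← Finset.add_sum_erase _ _ hgA] at E1
    rw [← Finset.add_sum_erase _ _ hrepB] at E2
    have hiff : δ = g ↔ b = rep := coarsen_eq_self_iff hg.1 hbp hbs
    have hite : (if δ = g then (1 : ℤ) else 0) = if b = rep then 1 else 0 := by
      by_cases h : δ = g
      · rw [if_pos h, if_pos (hiff.mp h)]
      · rw [if_neg h, if_neg (fun hh => h (hiff.mpr hh))]
    have hsum : ∑ x ∈ hB.toFinset.erase rep, M ℓ b x
        = ∑ x ∈ hA.toFinset.erase g, M m δ x := by
      apply Finset.sum_bij (fun γ' _ => coarsen γ' g)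
      · -- membership
        intro γ' hγ'
        rw [Finset.mem_erase, Set.Finite.mem_toFinset] at hγ'
        obtain ⟨hne, hγ'OC, hbγ', _⟩ := hγ'
        rw [Finset.mem_erase, Set.Finite.mem_toFinset]
        have hγ'sum : γ'.sum = ℓ := hγ'OC.2.1
        obtain ⟨b2, hb2p, hb2s, hb2e⟩ := coarserLEc_iff.mp hbγ'
        constructor
        · intro h
          apply hne
          have : coarsen γ' g = coarsen (List.replicate g.length 1) g := by
            rw [coarsen_self]; exact h
          have := coarsen_inj γ' (List.replicate g.length 1) g hg.1
            (le_of_eq hγ'sum) (by simp) this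
          rw [this]
        · refine ⟨coarsen_OC hg hγ'OC.1 hγ'OC.2.2 hγ'sum, ?_, ?_⟩
          · apply coarserLEc_iff.mpr
            refine ⟨b2, hb2p, ?_, ?_⟩
            · rw [coarsen_length]; exact hb2s
            · rw [hδdef, hb2e, ← coarsen_coarsen]
          · exact coarserLEc_iff.mpr ⟨γ', hγ'OC.1, hγ'sum, rfl⟩
      · -- injectivity
        intro γ1 h1 γ2 h2 he
        rw [Finset.mem_erase, Set.Finite.mem_toFinset] at h1 h2
        exact coarsen_inj γ1 γ2 g hg.1 (le_of_eq h1.2.1.2.1) (le_of_eq h2.2.1.2.1) he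
      · -- surjectivity
        intro ε hε
        rw [Finset.mem_erase, Set.Finite.mem_toFinset] at hε
        obtain ⟨hεne, hεOC, hδε, hεg⟩ := hε
        obtain ⟨b1, hb1p, hb1s, hb1e⟩ := coarserLEc_iff.mp hεg
        have hb1o : ∀ k ∈ b1, Odd k :=
          odd_of_coarsen_odd b1 g hb1s hg.2.2 (by rw [← hb1e]; exact hεOC.2.2)
        have hb1OC : IsOddComposition ℓ b1 := ⟨hb1p, hb1s, hb1o⟩
        refine ⟨b1, ?_, hb1e.symm⟩
        rw [Finset.mem_erase, Set.Finite.mem_toFinset]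
        obtain ⟨b2, hb2p, hb2s, hb2e⟩ := coarserLEc_iff.mp hδε
        have hεlen : ε.length = b1.length := by rw [hb1e, coarsen_length]
        have hbb2 : b = coarsen b2 b1 := by
          apply coarsen_inj b (coarsen b2 b1) g hg.1 (le_of_eq hbs)
          · rw [sum_coarsen, hb2s, hεlen, List.take_length]; exact le_of_eq hb1s
          · rw [← hδdef, hb2e, hb1e, coarsen_coarsen]
        constructor
        · intro h
          apply hεne
          rw [hb1e, h, hrep, hℓ, coarsen_self]
        · refine ⟨hb1OC, ?_, ?_⟩
          · exact coarserLEc_iff.mpr ⟨b2, hb2p, by rw [← hεlen]; exact hb2s, hbb2⟩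
          · have := coarserLEc_replicate hb1p
            rwa [hb1s] at this
      · -- values
        intro γ' hγ'
        rw [Finset.mem_erase, Set.Finite.mem_toFinset] at hγ'
        obtain ⟨hne, hγ'OC, hbγ', _⟩ := hγ'
        have hγ'sum : γ'.sum = ℓ := hγ'OC.2.1
        obtain ⟨b2, hb2p, hb2s, hb2e⟩ := coarserLEc_iff.mp hbγ'
        have hb2o : ∀ k ∈ b2, Odd k :=
          odd_of_coarsen_odd b2 γ' hb2s hγ'OC.2.2 (by rw [← hb2e]; exact hbo)
        have hlt : γ'.length < ℓ := length_lt_of_ne_replicate hγ'OC hne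
        have hN : γ'.length ≤ N := by omega
        have hεOC : IsOddComposition m (coarsen γ' g) :=
          coarsen_OC hg hγ'OC.1 hγ'OC.2.2 hγ'sum
        have IH1 := ih γ' ℓ b2 hN hγ'OC hb2p hb2o hb2s
        have IH2 := ih (coarsen γ' g) m b2 (by rw [coarsen_length]; exact hN) hεOC hb2p hb2o
          (by rw [coarsen_length]; exact hb2s)
        rw [← hb2e] at IH1
        rw [coarsen_coarsen, ← hb2e, ← hδdef] at IH2
        rw [IH1, IH2, coarsen_length]
    rw [hsum, ← hite] at E2
    linarith [E1, E2]

end Stmt17Aux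

open Stmt17Aux in
/-- For every `n ≥ 1`, `Σ_{α odd composition of n} μ_{ℓ(α)} = 1`, where
`μ_ℓ = Σ_{β odd composition of ℓ} μ(β, (1,…,1))`. -/
theorem stmt17 (M : ℕ → List ℕ → List ℕ → ℤ) (hM : IsMobiusOddComp M)
    (n : ℕ) (hn : 1 ≤ n) :
    (∑ᶠ α ∈ {α : List ℕ | IsOddComposition n α},
      (∑ᶠ β ∈ {β : List ℕ | IsOddComposition α.length β},
        M α.length β (List.replicate α.length 1))) = 1 := by
  classical
  set T : Finset (List ℕ) := (finite_OC n).toFinset with hT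
  rw [finsum_mem_eq_finite_toFinset_sum _ (finite_OC n)]
  have hrepT : List.replicate n 1 ∈ T := by
    rw [hT, Set.Finite.mem_toFinset]
    exact replicate_OC n
  have inner : ∀ α ∈ T,
      (∑ᶠ β ∈ {β : List ℕ | IsOddComposition α.length β},
        M α.length β (List.replicate α.length 1))
      = ∑ δ ∈ T.filter (fun δ => CoarserLEc δ α), M n δ α := by
    intro α hα
    rw [hT, Set.Finite.mem_toFinset] at hα
    rw [finsum_mem_eq_finite_toFinset_sum _ (finite_OC α.length)]
    apply Finset.sum_bij (fun β _ => coarsen β α)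
    · intro β hβ
      rw [Set.Finite.mem_toFinset] at hβ
      rw [Finset.mem_filter, hT, Set.Finite.mem_toFinset]
      have hβs : β.sum = α.length := hβ.2.1
      refine ⟨?_, ?_⟩
      · exact coarsen_OC hα hβ.1 hβ.2.2 hβs
      · exact coarserLEc_iff.mpr ⟨β, hβ.1, hβs, rfl⟩
    · intro β1 h1 β2 h2 he
      rw [Set.Finite.mem_toFinset] at h1 h2
      exact coarsen_inj β1 β2 α hα.1 (le_of_eq h1.2.1) (le_of_eq h2.2.1) he
    · intro δ hδ
      rw [Finset.mem_filter, hT, Set.Finite.mem_toFinset] at hδ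
      obtain ⟨hδOC, hδα⟩ := hδ
      obtain ⟨b, hbp, hbs, hbe⟩ := coarserLEc_iff.mp hδα
      have hbo : ∀ k ∈ b, Odd k :=
        odd_of_coarsen_odd b α hbs hα.2.2 (by rw [← hbe]; exact hδOC.2.2)
      exact ⟨b, by rw [Set.Finite.mem_toFinset]; exact ⟨hbp, hbs, hbo⟩, hbe.symm⟩
    · intro β hβ
      rw [Set.Finite.mem_toFinset] at hβ
      have := transport M hM α.length α n β le_rfl hα hβ.1 hβ.2.2 hβ.2.1
      rw [this]
  rw [Finset.sum_congr rfl inner]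
  have swap : ∑ α ∈ T, ∑ δ ∈ T.filter (fun δ => CoarserLEc δ α), M n δ α
      = ∑ δ ∈ T, ∑ α ∈ T.filter (fun α => CoarserLEc δ α), M n δ α := by
    simp only [Finset.sum_filter]
    exact Finset.sum_comm
  rw [swap]
  have key : ∀ δ ∈ T, ∑ α ∈ T.filter (fun α => CoarserLEc δ α), M n δ α
      = if δ = List.replicate n 1 then 1 else 0 := by
    intro δ hδT
    rw [hT, Set.Finite.mem_toFinset] at hδT
    have hδrep : CoarserLEc δ (List.replicate n 1) := by
      have := coarserLEc_replicate hδT.1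
      rwa [hδT.2.1] at this
    have E := hM n δ (List.replicate n 1) hδT (replicate_OC n) hδrep
    have hS : {γ : List ℕ | IsOddComposition n γ ∧ CoarserLEc δ γ ∧
        CoarserLEc γ (List.replicate n 1)}.Finite :=
      (finite_OC n).subset (fun x hx => hx.1)
    rw [finsum_mem_eq_finite_toFinset_sum _ hS] at E
    have hset : hS.toFinset = T.filter (fun α => CoarserLEc δ α) := by
      ext γ
      rw [Set.Finite.mem_toFinset, Finset.mem_filter, hT, Set.Finite.mem_toFinset]
      constructor
      · rintro ⟨h1, h2, _⟩
        exact ⟨h1, h2⟩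
      · rintro ⟨h1, h2⟩
        refine ⟨h1, h2, ?_⟩
        have := coarserLEc_replicate h1.1
        rwa [h1.2.1] at this
    rw [hset] at E
    exact E
  rw [Finset.sum_congr rfl key]
  rw [Finset.sum_ite_eq' T (List.replicate n 1) (fun _ => (1 : ℤ))]
  rw [if_pos hrepT]
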